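/- Let M be a compact hypersurface immersed in the unit sphere S^{n+1} ⊂ R^{n+2} with nonzero constant mean curvature H, and set c = (√(1+H²) − 1)/H. For every u ∈ R^{n+2}, the function h_u = f_u + c l_u satisfies the integral inequality ∫_M h_u J(h_u) ≤ −n ∫_M (f_u + H l_u)², where J is the Jacobi operator. -/

import Mathlib

open scoped RealInnerProductSpace

/-- A compact hypersurface `φ : M → S^{n+1} ⊂ ℝ^{n+2}` immersed in the unit sphere,
with Gauss map `ν`, shape operator `A` (expressed in orthonormal frames, so that
`Matrix.trace (A x) = n * H` and `|A|²(x) = ∑ i j, (A x i j)²`), constant mean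
curvature `H`, Laplace–Beltrami operator `Δ` acting on the smooth functions `Cinfty`,
and Riemannian volume measure `vol`.  The fields record the standard facts used in
the paper: `Δ l_v = -n l_v + n H f_v`, `Δ f_v = -|A|² f_v + n H l_v`, `|A|² ≥ n H²`
(Cauchy–Schwarz), self-adjointness of `Δ` and `∫ Δ g = 0` (the divergence theorem). -/
structure CMCHypersurface (n : ℕ) where
  M : Type
  [topM : TopologicalSpace M]
  [measM : MeasurableSpace M]
  borelM : BorelSpace M
  compactM : CompactSpace M
  nonemptyM : Nonempty M
  vol : MeasureTheory.Measure M
  finiteVol : MeasureTheory.IsFiniteMeasure vol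
  /-- the immersion -/
  φ : M → EuclideanSpace ℝ (Fin (n + 2))
  /-- the Gauss map -/
  ν : M → EuclideanSpace ℝ (Fin (n + 2))
  contφ : Continuous φ
  contν : Continuous ν
  φ_sphere : ∀ x, ‖φ x‖ = 1
  ν_sphere : ∀ x, ‖ν x‖ = 1
  ν_tangent : ∀ x, ⟪φ x, ν x⟫ = 0
  /-- the shape operator, expressed in orthonormal frames -/
  A : M → Matrix (Fin n) (Fin n) ℝ
  A_symm : ∀ x, (A x).IsSymm
  /-- the (constant) mean curvature, `H = (1/n) tr A` -/
  H : ℝ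
  traceA : ∀ x, (A x).trace = (n : ℝ) * H
  A2_ge : ∀ x, (n : ℝ) * H ^ 2 ≤ ∑ i, ∑ j, (A x i j) ^ 2
  /-- the smooth functions on `M` -/
  Cinfty : Submodule ℝ (M → ℝ)
  cont_of_mem : ∀ g ∈ Cinfty, Continuous g
  /-- the Laplace–Beltrami operator -/
  Δ : (M → ℝ) → (M → ℝ)
  Δ_mem : ∀ g ∈ Cinfty, Δ g ∈ Cinfty
  Δ_add : ∀ g ∈ Cinfty, ∀ h ∈ Cinfty, Δ (g + h) = Δ g + Δ h
  Δ_smul : ∀ (c : ℝ), ∀ g ∈ Cinfty, Δ (c • g) = c • Δ g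
  Δ_selfAdjoint : ∀ g ∈ Cinfty, ∀ h ∈ Cinfty,
    ∫ x, Δ g x * h x ∂vol = ∫ x, g x * Δ h x ∂vol
  Δ_int_zero : ∀ g ∈ Cinfty, ∫ x, Δ g x ∂vol = 0
  l_mem : ∀ v : EuclideanSpace ℝ (Fin (n + 2)), (fun x => ⟪φ x, v⟫) ∈ Cinfty
  f_mem : ∀ v : EuclideanSpace ℝ (Fin (n + 2)), (fun x => ⟪ν x, v⟫) ∈ Cinfty
  Δ_l : ∀ v : EuclideanSpace ℝ (Fin (n + 2)),
    Δ (fun x => ⟪φ x, v⟫) =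
      fun x => -(n : ℝ) * ⟪φ x, v⟫ + (n : ℝ) * H * ⟪ν x, v⟫
  Δ_f : ∀ v : EuclideanSpace ℝ (Fin (n + 2)),
    Δ (fun x => ⟪ν x, v⟫) =
      fun x => -(∑ i, ∑ j, (A x i j) ^ 2) * ⟪ν x, v⟫ + (n : ℝ) * H * ⟪φ x, v⟫

namespace CMCHypersurface

open MeasureTheory

variable {n : ℕ}

instance (S : CMCHypersurface n) : TopologicalSpace S.M := S.topM
instance (S : CMCHypersurface n) : MeasurableSpace S.M := S.measM
instance (S : CMCHypersurface n) : BorelSpace S.M := S.borelM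
instance (S : CMCHypersurface n) : CompactSpace S.M := S.compactM
instance (S : CMCHypersurface n) : Nonempty S.M := S.nonemptyM
instance (S : CMCHypersurface n) : IsFiniteMeasure S.vol := S.finiteVol

/-- `l_v(x) = ⟨φ(x), v⟩`. -/
noncomputable def l (S : CMCHypersurface n) (v : EuclideanSpace ℝ (Fin (n + 2))) :
    S.M → ℝ :=
  fun x => ⟪S.φ x, v⟫

/-- `f_v(x) = ⟨ν(x), v⟩`. -/
noncomputable def f (S : CMCHypersurface n) (v : EuclideanSpace ℝ (Fin (n + 2))) :
    S.M → ℝ :=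
  fun x => ⟪S.ν x, v⟫

/-- `|A|²`, the squared norm of the shape operator. -/
def A2 (S : CMCHypersurface n) : S.M → ℝ :=
  fun x => ∑ i, ∑ j, (S.A x i j) ^ 2

/-- The Jacobi (stability) operator `J(f) = -Δ f - |A|² f - n f`. -/
def J (S : CMCHypersurface n) (g : S.M → ℝ) : S.M → ℝ :=
  fun x => -(S.Δ g x) - S.A2 x * g x - (n : ℝ) * g x

/-- `M` is totally umbilical if its shape operator is everywhere a scalar
multiple of the identity. -/
def TotallyUmbilical (S : CMCHypersurface n) : Prop :=
  ∀ x, ∃ c : ℝ, S.A x = c • (1 : Matrix (Fin n) (Fin n) ℝ)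

/-- `M` is a Clifford hypersurface if, up to an ambient linear isometry, its image
is a cartesian product of two Euclidean spheres `S^k(r) × S^{n-k}(s)`, `r² + s² = 1`. -/
def IsClifford (S : CMCHypersurface n) : Prop :=
  ∃ (k : ℕ) (r s : ℝ), k < n + 1 ∧ 0 < r ∧ 0 < s ∧ r ^ 2 + s ^ 2 = 1 ∧
    ∃ T : EuclideanSpace ℝ (Fin (n + 2)) ≃ₗᵢ[ℝ] EuclideanSpace ℝ (Fin (n + 2)),
      Set.range (fun x => T (S.φ x)) =
        {y : EuclideanSpace ℝ (Fin (n + 2)) |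
          (∑ i : Fin (n + 2), if (i : ℕ) ≤ k then (y i) ^ 2 else 0) = r ^ 2 ∧
          (∑ i : Fin (n + 2), if (i : ℕ) ≤ k then 0 else (y i) ^ 2) = s ^ 2}

/-- The weak stability index: the supremum of the dimensions of subspaces
`V ⊆ C^∞(M)` with `∫ g = 0` for all `g ∈ V` and `∫ g J(g) < 0` for all
nonzero `g ∈ V`. -/
noncomputable def weakStabilityIndex (S : CMCHypersurface n) : Cardinal :=
  ⨆ (V : Submodule ℝ (S.M → ℝ)) (_ : (V : Set (S.M → ℝ)) ⊆ S.Cinfty ∧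
      ∀ g ∈ V, (∫ x, g x ∂S.vol) = 0 ∧ (g ≠ 0 → (∫ x, g x * S.J g x ∂S.vol) < 0)),
    Module.rank ℝ V

end CMCHypersurface

/-! For `h = f_u + c l_u` the Laplacian formulas give `J(h) = -n(1 + cH) f_u - (nH + c|A|²) l_u`,
and expanding shows that, as soon as `c²H + 2c = H`,
`h J(h) = -n(f_u + H l_u)² - c²(|A|² - nH²) l_u² + c (Δf_u · l_u - f_u · Δl_u)`.
The last term integrates to zero because `Δ` is self-adjoint, and the middle one is nonpositive
because `|A|² ≥ nH²`. The constant `c = (√(1+H²) - 1)/H` is a root of `Hc² + 2c - H`. -/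

lemma sq_mul_add_two_mul_eq_self {H c : ℝ} (hc : c = (Real.sqrt (1 + H ^ 2) - 1) / H) :
    c ^ 2 * H + 2 * c = H := by
  rcases eq_or_ne H 0 with rfl | hH
  · simp [hc]
  have hsqrt : Real.sqrt (1 + H ^ 2) ^ 2 = 1 + H ^ 2 := Real.sq_sqrt (by positivity)
  subst hc
  field_simp
  linear_combination hsqrt

namespace CMCHypersurface

open MeasureTheory

variable {n : ℕ} (S : CMCHypersurface n)

lemma integrable_of_continuous {g : S.M → ℝ} (hg : Continuous g) : Integrable g S.vol :=
  (BoundedContinuousFunction.mkOfCompact ⟨g, hg⟩).integrable S.vol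

lemma continuous_f (v : EuclideanSpace ℝ (Fin (n + 2))) : Continuous (S.f v) :=
  S.cont_of_mem _ (S.f_mem v)

lemma continuous_l (v : EuclideanSpace ℝ (Fin (n + 2))) : Continuous (S.l v) :=
  S.cont_of_mem _ (S.l_mem v)

lemma continuous_laplacian {g : S.M → ℝ} (hg : g ∈ S.Cinfty) : Continuous (S.Δ g) :=
  S.cont_of_mem _ (S.Δ_mem g hg)

lemma laplacian_f_apply (v : EuclideanSpace ℝ (Fin (n + 2))) (x : S.M) :
    S.Δ (S.f v) x = -S.A2 x * S.f v x + n * S.H * S.l v x :=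
  congrFun (S.Δ_f v) x

lemma laplacian_l_apply (v : EuclideanSpace ℝ (Fin (n + 2))) (x : S.M) :
    S.Δ (S.l v) x = -n * S.l v x + n * S.H * S.f v x :=
  congrFun (S.Δ_l v) x

lemma sum_f_basisFun_sq (x : S.M) :
    ∑ i, S.f (EuclideanSpace.basisFun (Fin (n + 2)) ℝ i) x ^ 2 = 1 := by
  have h := (EuclideanSpace.basisFun (Fin (n + 2)) ℝ).sum_inner_mul_inner (S.ν x) (S.ν x)
  rw [real_inner_self_eq_norm_sq, S.ν_sphere, one_pow] at h
  simpa only [f, sq, real_inner_comm (S.ν x)] using h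

/-- Nothing is assumed about the regularity of `A`; this formula expresses `|A|²` through
functions known to be smooth. -/
lemma A2_eq_sum (x : S.M) :
    S.A2 x = ∑ i, S.f (EuclideanSpace.basisFun (Fin (n + 2)) ℝ i) x *
      (n * S.H * S.l (EuclideanSpace.basisFun (Fin (n + 2)) ℝ i) x -
        S.Δ (S.f (EuclideanSpace.basisFun (Fin (n + 2)) ℝ i)) x) := by
  simp_rw [laplacian_f_apply]
  calc S.A2 x = S.A2 x * ∑ i, S.f (EuclideanSpace.basisFun (Fin (n + 2)) ℝ i) x ^ 2 := by
        rw [S.sum_f_basisFun_sq, mul_one]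
    _ = _ := by
        rw [Finset.mul_sum]
        exact Finset.sum_congr rfl fun i _ => by ring

lemma continuous_A2 : Continuous S.A2 := by
  rw [funext S.A2_eq_sum]
  refine continuous_finsetSum _ fun i _ => ?_
  exact (S.continuous_f _).mul ((continuous_const.mul (S.continuous_l _)).sub
    (S.continuous_laplacian (S.f_mem _)))

lemma integral_laplacian_mul_sub_mul_laplacian {g k : S.M → ℝ} (hg : g ∈ S.Cinfty)
    (hk : k ∈ S.Cinfty) : ∫ x, (S.Δ g x * k x - g x * S.Δ k x) ∂S.vol = 0 := by
  rw [integral_sub, S.Δ_selfAdjoint g hg k hk, sub_self]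
  · exact S.integrable_of_continuous ((S.continuous_laplacian hg).mul (S.cont_of_mem k hk))
  · exact S.integrable_of_continuous ((S.cont_of_mem g hg).mul (S.continuous_laplacian hk))

lemma laplacian_f_add_mul_l (u : EuclideanSpace ℝ (Fin (n + 2))) (c : ℝ) (x : S.M) :
    S.Δ (fun y => S.f u y + c * S.l u y) x = S.Δ (S.f u) x + c * S.Δ (S.l u) x := by
  have h := S.Δ_add _ (S.f_mem u) _ (S.Cinfty.smul_mem c (S.l_mem u))
  rw [S.Δ_smul c _ (S.l_mem u)] at h
  exact congrFun h x

lemma mul_jacobi_f_add_mul_l (u : EuclideanSpace ℝ (Fin (n + 2))) {c : ℝ}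
    (hc : c ^ 2 * S.H + 2 * c = S.H) (x : S.M) :
    (S.f u x + c * S.l u x) * S.J (fun y => S.f u y + c * S.l u y) x =
      -n * (S.f u x + S.H * S.l u x) ^ 2 - c ^ 2 * ((S.A2 x - n * S.H ^ 2) * S.l u x ^ 2) +
        c * (S.Δ (S.f u) x * S.l u x - S.f u x * S.Δ (S.l u) x) := by
  simp only [J, laplacian_f_add_mul_l, laplacian_f_apply, laplacian_l_apply]
  linear_combination (-(n : ℝ) * (S.f u x * S.l u x) - n * S.H * S.l u x ^ 2) * hc

lemma integral_mul_jacobi_f_add_mul_l (u : EuclideanSpace ℝ (Fin (n + 2))) {c : ℝ}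
    (hc : c ^ 2 * S.H + 2 * c = S.H) :
    ∫ x, (S.f u x + c * S.l u x) * S.J (fun y => S.f u y + c * S.l u y) x ∂S.vol =
      -n * ∫ x, (S.f u x + S.H * S.l u x) ^ 2 ∂S.vol -
        c ^ 2 * ∫ x, (S.A2 x - n * S.H ^ 2) * S.l u x ^ 2 ∂S.vol := by
  have hf := S.continuous_f u
  have hl := S.continuous_l u
  have hΔf := S.continuous_laplacian (S.f_mem u)
  have hΔl := S.continuous_laplacian (S.l_mem u)
  have hA2 := S.continuous_A2
  simp_rw [S.mul_jacobi_f_add_mul_l u hc]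
  rw [integral_add, integral_sub, integral_const_mul, integral_const_mul, integral_const_mul,
    S.integral_laplacian_mul_sub_mul_laplacian (g := S.f u) (k := S.l u) (S.f_mem u) (S.l_mem u),
    mul_zero, add_zero]
  all_goals exact S.integrable_of_continuous (by fun_prop)

end CMCHypersurface

theorem CMCHypersurface.integral_h_jacobi_le_general {n : ℕ} (S : CMCHypersurface n)
    (c : ℝ) (hc : c = (Real.sqrt (1 + S.H ^ 2) - 1) / S.H)
    (u : EuclideanSpace ℝ (Fin (n + 2)))
    (h : S.M → ℝ) (hh : h = fun x => S.f u x + c * S.l u x) :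
    ∫ x, h x * S.J h x ∂S.vol ≤
      -(n : ℝ) * ∫ x, (S.f u x + S.H * S.l u x) ^ 2 ∂S.vol := by
  subst hh
  rw [S.integral_mul_jacobi_f_add_mul_l u (sq_mul_add_two_mul_eq_self hc)]
  have hA2 : 0 ≤ ∫ x, (S.A2 x - n * S.H ^ 2) * S.l u x ^ 2 ∂S.vol :=
    MeasureTheory.integral_nonneg fun x => mul_nonneg (sub_nonneg.mpr (S.A2_ge x)) (sq_nonneg _)
  linarith [mul_nonneg (sq_nonneg c) hA2]

/-- With `c = (√(1+H²) − 1)/H` and `h_u = f_u + c l_u`, one has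
`∫ h_u J(h_u) ≤ −n ∫ (f_u + H l_u)²`. -/
theorem CMCHypersurface.integral_h_jacobi_le {n : ℕ} (S : CMCHypersurface n)
    (hH : S.H ≠ 0) (c : ℝ) (hc : c = (Real.sqrt (1 + S.H ^ 2) - 1) / S.H)
    (u : EuclideanSpace ℝ (Fin (n + 2)))
    (h : S.M → ℝ) (hh : h = fun x => S.f u x + c * S.l u x) :
    ∫ x, h x * S.J h x ∂S.vol ≤
      -(n : ℝ) * ∫ x, (S.f u x + S.H * S.l u x) ^ 2 ∂S.vol :=
  CMCHypersurface.integral_h_jacobi_le_general S c hc u h hh
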